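/- Let a,b,c,d be positive integers with b and d even, let A be the 3×3 generalized Cartan matrix with rows (2,−a,−b), (−c,2,−d), (−1,−1,2), and let F be a field. Then K_2(A,F) is isomorphic to K_2(2,F)/((ad−bc)/2)⟨{u²,v}⟩. -/

import Mathlib

/-!
For a Steinberg cocycle `s` (a function satisfying (B1)-(B4)) the skew part
`β(u,v) = s(u,v) - s(v,u)` is bilinear and equals `s(u², v) = s(u, v²)`, so that
`s(u^{2k}, v) = s(u, v^{2k}) = k β(u,v)`. In `K₂(A,F)`, relation (L5) between `c₃` and `c₁`
(resp. `c₂`) gives `c₁ = (b/2) β₃` and `c₂ = (d/2) β₃`, since `a₃₁ = a₃₂ = -1` and `b, d` are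
even; (L5) between `c₁` and `c₂` then forces `((ad - bc)/2) β₃ = 0`. Hence `{u,v} ↦ c₃(u,v)` and
`c_i(u,v) ↦ {u^{e_i}, v}` with `e = (b, d, 1)` are mutually inverse isomorphisms between
`K₂(2,F)/((ad-bc)/2)⟨{u²,v}⟩` and `K₂(A,F)`.
-/

/-!
Common definitions: presentations of the abelian groups `K₂(F)`, `K₂(2,F)` and `K₂(A,F)`
(Rehmann–Morita).  "The abelian group generated by symbols subject to relations" is
formalized as the abelianization of the corresponding presented group.
-/

variable (F : Type) [Field F]

/-- Relators for `K₂(F)`: the Steinberg symbol relations (A1)-(A3).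
(A3) `{u, 1-u} = 1` (for `u ≠ 1`) is encoded as: for units `u, w` with `(w : F) = 1 - u`
(which forces `u ≠ 1`), `{u, w}` is a relator. -/
def K2Rels : Set (FreeGroup (Fˣ × Fˣ)) :=
  {r | (∃ t u v : Fˣ, r = FreeGroup.of (t * u, v) * (FreeGroup.of (t, v) * FreeGroup.of (u, v))⁻¹) ∨
       (∃ t u v : Fˣ, r = FreeGroup.of (t, u * v) * (FreeGroup.of (t, u) * FreeGroup.of (t, v))⁻¹) ∨
       (∃ u w : Fˣ, (w : F) = 1 - (u : F) ∧ r = FreeGroup.of (u, w))}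

/-- `K₂(F)`: the abelian group generated by the symbols `{u,v}`, `u v ∈ Fˣ`,
subject to the Steinberg symbol relations (A1)-(A3). -/
def K2 : Type := Abelianization (PresentedGroup (K2Rels F))

noncomputable instance : CommGroup (K2 F) := inferInstanceAs (CommGroup (Abelianization _))

/-- The Steinberg symbol `{u,v}` in `K₂(F)`. -/
def K2.sym (u v : Fˣ) : K2 F := Abelianization.of (PresentedGroup.of (u, v))

/-- The subgroup `m·K₂(F)` of `m`-th powers of elements of `K₂(F)`. -/
noncomputable def K2.powSubgroup (m : ℕ) : Subgroup (K2 F) := Subgroup.closure {x | ∃ y : K2 F, x = y ^ m}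

/-- Relators for `K₂(2,F)`: the Steinberg cocycle relations (B1)-(B4). -/
def K2SLRels : Set (FreeGroup (Fˣ × Fˣ)) :=
  {r | (∃ t u v : Fˣ, r = FreeGroup.of (t, u) * FreeGroup.of (t * u, v) *
          (FreeGroup.of (t, u * v) * FreeGroup.of (u, v))⁻¹) ∨
       (r = FreeGroup.of ((1 : Fˣ), (1 : Fˣ))) ∨
       (∃ u v : Fˣ, r = FreeGroup.of (u, v) * (FreeGroup.of (u⁻¹, v⁻¹))⁻¹) ∨
       (∃ u v w : Fˣ, (w : F) = 1 - (u : F) ∧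
          r = FreeGroup.of (u, v) * (FreeGroup.of (u, w * v))⁻¹)}

/-- `K₂(2,F)`: the abelian group generated by the symbols `{u,v}`, `u v ∈ Fˣ`,
subject to the Steinberg cocycle relations (B1)-(B4). -/
def K2SL : Type := Abelianization (PresentedGroup (K2SLRels F))

noncomputable instance : CommGroup (K2SL F) := inferInstanceAs (CommGroup (Abelianization _))

/-- The Steinberg cocycle `{u,v}` in `K₂(2,F)`. -/
def K2SL.sym (u v : Fˣ) : K2SL F := Abelianization.of (PresentedGroup.of (u, v))

/-- The subgroup `m⟨{u²,v}⟩` of `K₂(2,F)` generated by the elements `{u²,v}^m`, `u v ∈ Fˣ`. -/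
noncomputable def K2SL.sqSubgroup (m : ℤ) : Subgroup (K2SL F) :=
  Subgroup.closure {x | ∃ u v : Fˣ, x = (K2SL.sym F (u ^ 2) v) ^ m}

/-- A generalized Cartan matrix: `a_{ii} = 2`, off-diagonal entries `≤ 0`,
and `a_{ij} = 0 ↔ a_{ji} = 0`. -/
def IsGCM {n : ℕ} (A : Matrix (Fin n) (Fin n) ℤ) : Prop :=
  (∀ i, A i i = 2) ∧ (∀ i j, i ≠ j → A i j ≤ 0) ∧ (∀ i j, A i j = 0 ↔ A j i = 0)

/-- Relators for `K₂(A,F)`: the Rehmann–Morita relations (L1)-(L7). -/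
def K2ARels {n : ℕ} (A : Matrix (Fin n) (Fin n) ℤ) : Set (FreeGroup (Fin n × Fˣ × Fˣ)) :=
  {r | (∃ (i : Fin n) (t u v : Fˣ),
          r = FreeGroup.of (i, t, u) * FreeGroup.of (i, t * u, v) *
              (FreeGroup.of (i, t, u * v) * FreeGroup.of (i, u, v))⁻¹) ∨
       (∃ i : Fin n, r = FreeGroup.of (i, 1, 1)) ∨
       (∃ (i : Fin n) (u v : Fˣ),
          r = FreeGroup.of (i, u, v) * (FreeGroup.of (i, u⁻¹, v⁻¹))⁻¹) ∨
       (∃ (i : Fin n) (u v w : Fˣ), (w : F) = 1 - (u : F) ∧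
          r = FreeGroup.of (i, u, v) * (FreeGroup.of (i, u, w * v))⁻¹) ∨
       (∃ (i j : Fin n) (u v : Fˣ), i ≠ j ∧
          r = FreeGroup.of (i, u, v ^ (A j i)) * (FreeGroup.of (j, u ^ (A i j), v))⁻¹) ∨
       (∃ (i j : Fin n) (t u v : Fˣ), i ≠ j ∧
          r = FreeGroup.of (i, t * u, v ^ (A j i)) *
              (FreeGroup.of (i, t, v ^ (A j i)) * FreeGroup.of (i, u, v ^ (A j i)))⁻¹) ∨
       (∃ (i j : Fin n) (t u v : Fˣ), i ≠ j ∧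
          r = FreeGroup.of (i, t ^ (A j i), u * v) *
              (FreeGroup.of (i, t ^ (A j i), u) * FreeGroup.of (i, t ^ (A j i), v))⁻¹)}

/-- `K₂(A,F)`: the abelian group generated by the symbols `c_i(u,v)` subject to (L1)-(L7). -/
def K2A {n : ℕ} (A : Matrix (Fin n) (Fin n) ℤ) : Type :=
  Abelianization (PresentedGroup (K2ARels F A))

noncomputable instance {n : ℕ} (A : Matrix (Fin n) (Fin n) ℤ) : CommGroup (K2A F A) :=
  inferInstanceAs (CommGroup (Abelianization _))

/-- The generator `c_i(u,v)` of `K₂(A,F)`. -/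
def K2A.c {n : ℕ} (A : Matrix (Fin n) (Fin n) ℤ) (i : Fin n) (u v : Fˣ) : K2A F A :=
  Abelianization.of (PresentedGroup.of (i, u, v))

open scoped Classical in
/-- `LGroup F p` is `K₂(F)` when `p` holds and `K₂(2,F)` otherwise.  Taking
`p = "the i-th column of A has an odd entry"` gives the factor `L_i`. -/
noncomputable def LGroup (p : Prop) : Type :=
  Abelianization (PresentedGroup (if p then K2Rels F else K2SLRels F))

noncomputable instance (p : Prop) : CommGroup (LGroup F p) :=
  inferInstanceAs (CommGroup (Abelianization _))

/-- The symbol `{u,v}` (Steinberg symbol resp. cocycle) in `LGroup F p`. -/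
noncomputable def LGroup.sym (p : Prop) (u v : Fˣ) : LGroup F p :=
  Abelianization.of (PresentedGroup.of (u, v))

/-- Relators `x_i^{a_{ji}} = x_j^{a_{ij}}` (`i < j`) for the auxiliary abelian group `G`. -/
def GRels {n : ℕ} (A : Matrix (Fin n) (Fin n) ℤ) : Set (FreeGroup (Fin n)) :=
  {r | ∃ i j : Fin n, i < j ∧ r = FreeGroup.of i ^ (A j i) * (FreeGroup.of j ^ (A i j))⁻¹}

/-- The abelian group `G = ⟨x_1,…,x_n ∣ x_i^{a_{ji}} = x_j^{a_{ij}}, [x_i,x_j] = 1⟩`. -/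
def GGroup {n : ℕ} (A : Matrix (Fin n) (Fin n) ℤ) : Type :=
  Abelianization (PresentedGroup (GRels A))

noncomputable instance {n : ℕ} (A : Matrix (Fin n) (Fin n) ℤ) : CommGroup (GGroup A) :=
  inferInstanceAs (CommGroup (Abelianization _))


structure IsSteinbergCocycle {F A : Type*} [Field F] [AddCommGroup A] (s : Fˣ → Fˣ → A) :
    Prop where
  cocycle : ∀ t u v, s t u + s (t * u) v = s t (u * v) + s u v
  apply_one_one : s 1 1 = 0
  apply_inv_inv : ∀ u v, s u⁻¹ v⁻¹ = s u v
  apply_mul_right_of_val_eq_one_sub : ∀ u v w : Fˣ, (w : F) = 1 - u → s u (w * v) = s u v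

def skew {M A : Type*} [AddGroup A] (s : M → M → A) (u v : M) : A := s u v - s v u

section TwoCocycle

variable {M A : Type*} [CommGroup M] [AddCommGroup A] {s : M → M → A}
  (hs : ∀ t u v, s t u + s (t * u) v = s t (u * v) + s u v)
include hs

theorem skew_mul_right (u v w : M) : skew s u (v * w) = skew s u v + skew s u w := by
  have h₁ := hs u v w
  have h₂ := hs v w u
  have h₃ := hs v u w
  rw [mul_comm w u] at h₂
  rw [mul_comm v u] at h₃
  simp only [skew]
  linear_combination (norm := abel) -h₁ - h₂ + h₃

theorem skew_mul_left (u v w : M) : skew s (u * v) w = skew s u w + skew s v w := by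
  have h := skew_mul_right hs w u v
  simp only [skew] at h ⊢
  linear_combination (norm := abel) -h

theorem skew_zpow_left (u v : M) (k : ℤ) : skew s (u ^ k) v = k • skew s u v :=
  map_zsmul (AddMonoidHom.mk' (fun x : Additive M => skew s x.toMul v)
    fun x y => skew_mul_left hs x.toMul y.toMul v) k (Additive.ofMul u)

theorem skew_zpow_right (u v : M) (k : ℤ) : skew s u (v ^ k) = k • skew s u v :=
  map_zsmul (AddMonoidHom.mk' (fun x : Additive M => skew s u x.toMul)
    fun x y => skew_mul_right hs u x.toMul y.toMul) k (Additive.ofMul v)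

end TwoCocycle

namespace IsSteinbergCocycle

variable {F A : Type*} [Field F] [AddCommGroup A] {s : Fˣ → Fˣ → A}
  (hs : IsSteinbergCocycle s)
include hs

theorem apply_one_left (v : Fˣ) : s 1 v = 0 := by
  have h := hs.cocycle 1 1 v
  rw [one_mul, one_mul] at h
  linear_combination (norm := abel) hs.apply_one_one - h

theorem apply_one_right (u : Fˣ) : s u 1 = 0 := by
  have h := hs.cocycle u 1 1
  rw [mul_one, one_mul] at h
  linear_combination (norm := abel) h + hs.apply_one_one

theorem apply_eq_zero_of_val_eq_one_sub {u w : Fˣ} (hw : (w : F) = 1 - u) : s u w = 0 := by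
  simpa [hs.apply_one_right] using hs.apply_mul_right_of_val_eq_one_sub u 1 w hw

/-- Apply (B4) to `u` and, after (B3), to `u⁻¹`: the two factors differ by
`1 - u = -u (1 - u⁻¹)`. -/
theorem apply_neg_mul_right (u v : Fˣ) : s u (-u * v) = s u v := by
  rcases eq_or_ne u 1 with rfl | hu
  · rw [hs.apply_one_left, hs.apply_one_left]
  have hu' : (u : F) ≠ 1 := mt Units.val_eq_one.1 hu
  have hu'' : ((u⁻¹ : Fˣ) : F) ≠ 1 := mt Units.val_eq_one.1 (inv_ne_one.2 hu)
  set w := Units.mk0 (1 - (u : F)) (sub_ne_zero.2 hu'.symm)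
  set w' := Units.mk0 (1 - ((u⁻¹ : Fˣ) : F)) (sub_ne_zero.2 hu''.symm)
  have hw : w = -u * w' := by
    ext
    simp only [w, w', Units.val_mk0, Units.val_mul, Units.val_neg, Units.val_inv_eq_inv_val]
    field_simp
    ring
  calc s u (-u * v) = s u (w * (w'⁻¹ * v)) := by rw [hw]; group
    _ = s u (w'⁻¹ * v) := hs.apply_mul_right_of_val_eq_one_sub u _ w rfl
    _ = s u⁻¹ (w' * v⁻¹) := by rw [← hs.apply_inv_inv u, mul_inv, inv_inv]
    _ = s u v := by rw [hs.apply_mul_right_of_val_eq_one_sub u⁻¹ v⁻¹ w' rfl, hs.apply_inv_inv]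

theorem apply_mul_mul_right (u v : Fˣ) : s u (u * u * v) = s u v := by
  rw [← hs.apply_neg_mul_right u v, ← hs.apply_neg_mul_right u (-u * v)]
  congr 1
  simp [mul_assoc]

theorem apply_self (u : Fˣ) : s u u = s u (-1) := by
  simpa using hs.apply_neg_mul_right u (-1)

theorem apply_inv_self (u : Fˣ) : s u u⁻¹ = s u (-1) := by
  simpa using (hs.apply_neg_mul_right u u⁻¹).symm

theorem apply_neg_right (t u : Fˣ) : s t (-u) = s t u + s (t * u) (-1) - s u (-1) := by
  have h := hs.cocycle t u (-1)
  rw [mul_neg_one] at h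
  linear_combination (norm := abel) -h

theorem apply_self_mul (t u : Fˣ) : s t (t * u) = s t u + s (t * u) (-1) - s u (-1) := by
  rw [← hs.apply_neg_right, ← hs.apply_neg_mul_right t (-u)]
  simp

theorem apply_neg_neg_one (t : Fˣ) : s (-t) (-1) = s (-1) (-1) - s t (-1) := by
  have h := hs.apply_neg_right t (-1)
  rw [neg_neg, hs.apply_one_right, mul_neg_one] at h
  linear_combination (norm := abel) -h

theorem apply_inv_neg_one (u : Fˣ) : s u⁻¹ (-1) = s u (-1) := by
  simpa using hs.apply_inv_inv u (-1)

theorem apply_mul_self_left (u v : Fˣ) :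
    s (u * u) v = s u v + s u v + s (u * v) (-1) - s u (-1) - s v (-1) := by
  have h := hs.cocycle u u v
  rw [hs.apply_self, hs.apply_self_mul] at h
  linear_combination (norm := abel) h

theorem apply_mul_self_neg_right (u v : Fˣ) : s (u * u) (-v) = s (u * u) v := by
  rw [hs.apply_mul_self_left, hs.apply_mul_self_left, mul_neg, hs.apply_neg_neg_one (u * v),
    hs.apply_neg_neg_one v, hs.apply_neg_right u v]
  abel

theorem apply_mul_self_mul_neg_one (u v : Fˣ) : s (u * u * v) (-1) = s v (-1) := by
  have h := hs.cocycle (u * u) v (-1)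
  rw [mul_neg_one, hs.apply_mul_self_neg_right] at h
  linear_combination (norm := abel) h

theorem apply_inv_left (u v : Fˣ) :
    s u⁻¹ v = s u (-1) - s u v - s (u * v) (-1) + s v (-1) := by
  have h := hs.cocycle u u⁻¹ v
  have h' := hs.apply_mul_mul_right u (u⁻¹ * v)
  rw [mul_inv_cancel, hs.apply_one_left, hs.apply_inv_self] at h
  rw [show u * u * (u⁻¹ * v) = u * v by group, hs.apply_self_mul] at h'
  linear_combination (norm := abel) -h + h'

theorem apply_inv_right (u v : Fˣ) :
    s v u⁻¹ = s u v + s (u * v) (-1) - s (v * u⁻¹) (-1) := by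
  have h := hs.cocycle u v (u * v)⁻¹
  have h' := hs.apply_mul_mul_right v (u * v)⁻¹
  rw [show v * (u * v)⁻¹ = u⁻¹ by group, hs.apply_inv_self, hs.apply_inv_self] at h
  rw [show v * v * (u * v)⁻¹ = v * u⁻¹ by group, hs.apply_self_mul] at h'
  linear_combination (norm := abel) h' - h + hs.apply_inv_neg_one u

theorem apply_add_apply_swap (u v : Fˣ) :
    s u v + s v u = s u (-1) + s v (-1) - s (u * v) (-1) := by
  have h := hs.apply_inv_right u⁻¹ v
  have h' := hs.apply_mul_self_mul_neg_one u (u⁻¹ * v)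
  rw [inv_inv, mul_comm v u] at h
  rw [show u * u * (u⁻¹ * v) = u * v by group] at h'
  linear_combination (norm := abel) h + hs.apply_inv_left u v - h'

theorem skew_eq_apply_mul_self_left (u v : Fˣ) : skew s u v = s (u * u) v := by
  rw [skew, hs.apply_mul_self_left]
  linear_combination (norm := abel) -hs.apply_add_apply_swap u v

theorem skew_eq_apply_mul_self_right (u v : Fˣ) : skew s u v = s u (v * v) := by
  have h := hs.apply_add_apply_swap u (v * v)
  have h₀ : s (v * v) (-1) = 0 := by
    simpa [hs.apply_one_left] using hs.apply_mul_self_mul_neg_one v 1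
  rw [h₀, mul_comm u, hs.apply_mul_self_mul_neg_one, ← hs.skew_eq_apply_mul_self_left] at h
  simp only [skew] at h ⊢
  linear_combination (norm := abel) -h

theorem apply_zpow_two_mul_left (u v : Fˣ) (k : ℤ) : s (u ^ (2 * k)) v = k • skew s u v := by
  rw [two_mul, zpow_add, ← hs.skew_eq_apply_mul_self_left, skew_zpow_left hs.cocycle]

theorem apply_zpow_two_mul_right (u v : Fˣ) (k : ℤ) : s u (v ^ (2 * k)) = k • skew s u v := by
  rw [two_mul, zpow_add, ← hs.skew_eq_apply_mul_self_right, skew_zpow_right hs.cocycle]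

theorem skew_eq_zero_of_val_eq_one_sub {u w : Fˣ} (hw : (w : F) = 1 - u) : skew s u w = 0 := by
  rw [skew, hs.apply_eq_zero_of_val_eq_one_sub hw,
    hs.apply_eq_zero_of_val_eq_one_sub (u := w) (w := u) (by rw [hw]; ring), sub_zero]

theorem comp_zpow_two_mul_left (k : ℤ) : IsSteinbergCocycle fun u v => s (u ^ (2 * k)) v := by
  simp only [hs.apply_zpow_two_mul_left]
  have hmul_left := skew_mul_left hs.cocycle
  have hmul_right := skew_mul_right hs.cocycle
  refine ⟨fun t u v => ?_, ?_, fun u v => ?_, fun u v w hw => ?_⟩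
  · rw [hmul_left, hmul_right]
    module
  · simp [skew]
  · rw [← zpow_neg_one, ← zpow_neg_one v, skew_zpow_left hs.cocycle, skew_zpow_right hs.cocycle,
      smul_smul]
    simp
  · rw [hmul_right, hs.skew_eq_zero_of_val_eq_one_sub hw, zero_add]

theorem map {B : Type*} [AddCommGroup B] (f : A →+ B) :
    IsSteinbergCocycle fun u v => f (s u v) where
  cocycle t u v := by rw [← map_add, hs.cocycle, map_add]
  apply_one_one := by rw [hs.apply_one_one, map_zero]
  apply_inv_inv u v := by rw [hs.apply_inv_inv]
  apply_mul_right_of_val_eq_one_sub u v w hw := by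
    rw [hs.apply_mul_right_of_val_eq_one_sub u v w hw]

end IsSteinbergCocycle

section Presentations

variable {F : Type} [Field F] {G H : Type*} [CommGroup G] [Group H]

theorem K2SL.isSteinbergCocycle_sym :
    IsSteinbergCocycle fun u v => Additive.ofMul (K2SL.sym F u v) where
  cocycle t u v := by
    have h := PresentedGroup.mk_eq_mk_of_mul_inv_mem (rels := K2SLRels F) (Or.inl ⟨t, u, v, rfl⟩)
    simp only [map_mul] at h
    exact congrArg Abelianization.of h
  apply_one_one := congrArg Abelianization.of <|
    PresentedGroup.one_of_mem (rels := K2SLRels F) (Or.inr (Or.inl rfl))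
  apply_inv_inv u v := (congrArg Abelianization.of <| PresentedGroup.mk_eq_mk_of_mul_inv_mem
    (rels := K2SLRels F) (Or.inr (Or.inr (Or.inl ⟨u, v, rfl⟩)))).symm
  apply_mul_right_of_val_eq_one_sub u v w hw := (congrArg Abelianization.of <|
    PresentedGroup.mk_eq_mk_of_mul_inv_mem (rels := K2SLRels F)
      (Or.inr (Or.inr (Or.inr ⟨u, v, w, hw, rfl⟩)))).symm

noncomputable def K2SL.lift {s : Fˣ → Fˣ → Additive G} (hs : IsSteinbergCocycle s) :
    K2SL F →* G :=
  Abelianization.lift <| PresentedGroup.toGroup (f := fun p : Fˣ × Fˣ => (s p.1 p.2).toMul) <| by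
    rintro r (⟨t, u, v, rfl⟩ | rfl | ⟨u, v, rfl⟩ | ⟨u, v, w, hw, rfl⟩) <;>
      simp only [map_mul, map_inv, FreeGroup.lift_apply_of, mul_inv_eq_one]
    · exact congrArg Additive.toMul (hs.cocycle t u v)
    · exact congrArg Additive.toMul hs.apply_one_one
    · exact congrArg Additive.toMul (hs.apply_inv_inv u v).symm
    · exact congrArg Additive.toMul (hs.apply_mul_right_of_val_eq_one_sub u v w hw).symm

theorem K2SL.lift_sym {s : Fˣ → Fˣ → Additive G} (hs : IsSteinbergCocycle s) (u v : Fˣ) :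
    K2SL.lift hs (K2SL.sym F u v) = (s u v).toMul :=
  (Abelianization.lift_apply_of _ _).trans (PresentedGroup.toGroup.of _)

theorem K2SL.hom_ext {f g : K2SL F →* H}
    (h : ∀ u v, f (K2SL.sym F u v) = g (K2SL.sym F u v)) : f = g :=
  Abelianization.hom_ext _ _ (PresentedGroup.ext fun p => h p.1 p.2)

variable {n : ℕ} {A : Matrix (Fin n) (Fin n) ℤ}

theorem K2A.isSteinbergCocycle_c (i : Fin n) :
    IsSteinbergCocycle fun u v => Additive.ofMul (K2A.c F A i u v) where
  cocycle t u v := by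
    have h := PresentedGroup.mk_eq_mk_of_mul_inv_mem (rels := K2ARels F A)
      (Or.inl ⟨i, t, u, v, rfl⟩)
    simp only [map_mul] at h
    exact congrArg Abelianization.of h
  apply_one_one := congrArg Abelianization.of <|
    PresentedGroup.one_of_mem (rels := K2ARels F A) (Or.inr (Or.inl ⟨i, rfl⟩))
  apply_inv_inv u v := (congrArg Abelianization.of <| PresentedGroup.mk_eq_mk_of_mul_inv_mem
    (rels := K2ARels F A) (Or.inr (Or.inr (Or.inl ⟨i, u, v, rfl⟩)))).symm
  apply_mul_right_of_val_eq_one_sub u v w hw := (congrArg Abelianization.of <|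
    PresentedGroup.mk_eq_mk_of_mul_inv_mem (rels := K2ARels F A)
      (Or.inr (Or.inr (Or.inr (Or.inl ⟨i, u, v, w, hw, rfl⟩))))).symm

theorem K2A.c_zpow_right {i j : Fin n} (hij : i ≠ j) (u v : Fˣ) :
    K2A.c F A i u (v ^ A j i) = K2A.c F A j (u ^ A i j) v :=
  congrArg Abelianization.of <| PresentedGroup.mk_eq_mk_of_mul_inv_mem (rels := K2ARels F A)
    (Or.inr (Or.inr (Or.inr (Or.inr (Or.inl ⟨i, j, u, v, hij, rfl⟩)))))

noncomputable def K2A.lift (s : Fin n → Fˣ → Fˣ → Additive G)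
    (hs : ∀ i, IsSteinbergCocycle (s i))
    (h₅ : ∀ i j, i ≠ j → ∀ u v, s i u (v ^ A j i) = s j (u ^ A i j) v)
    (h₆ : ∀ i j, i ≠ j → ∀ t u v,
      s i (t * u) (v ^ A j i) = s i t (v ^ A j i) + s i u (v ^ A j i))
    (h₇ : ∀ i j, i ≠ j → ∀ t u v,
      s i (t ^ A j i) (u * v) = s i (t ^ A j i) u + s i (t ^ A j i) v) :
    K2A F A →* G :=
  Abelianization.lift <|
    PresentedGroup.toGroup (f := fun p : Fin n × Fˣ × Fˣ => (s p.1 p.2.1 p.2.2).toMul) <| by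
      rintro r (⟨i, t, u, v, rfl⟩ | ⟨i, rfl⟩ | ⟨i, u, v, rfl⟩ | ⟨i, u, v, w, hw, rfl⟩ |
        ⟨i, j, u, v, hij, rfl⟩ | ⟨i, j, t, u, v, hij, rfl⟩ | ⟨i, j, t, u, v, hij, rfl⟩) <;>
        simp only [map_mul, map_inv, FreeGroup.lift_apply_of, mul_inv_eq_one]
      · exact congrArg Additive.toMul ((hs i).cocycle t u v)
      · exact congrArg Additive.toMul (hs i).apply_one_one
      · exact congrArg Additive.toMul ((hs i).apply_inv_inv u v).symm
      · exact congrArg Additive.toMul ((hs i).apply_mul_right_of_val_eq_one_sub u v w hw).symm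
      · exact congrArg Additive.toMul (h₅ i j hij u v)
      · exact congrArg Additive.toMul (h₆ i j hij t u v)
      · exact congrArg Additive.toMul (h₇ i j hij t u v)

theorem K2A.lift_c (s : Fin n → Fˣ → Fˣ → Additive G) (hs h₅ h₆ h₇) (i : Fin n) (u v : Fˣ) :
    K2A.lift (A := A) s hs h₅ h₆ h₇ (K2A.c F A i u v) = (s i u v).toMul :=
  (Abelianization.lift_apply_of _ _).trans (PresentedGroup.toGroup.of _)

theorem K2A.hom_ext {f g : K2A F A →* H}
    (h : ∀ i u v, f (K2A.c F A i u v) = g (K2A.c F A i u v)) : f = g :=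
  Abelianization.hom_ext _ _ (PresentedGroup.ext fun p => h p.1 p.2.1 p.2.2)

theorem K2A.ofMul_c_eq_zsmul_skew {i j : Fin n} (hij : i ≠ j) {k : ℤ} (hji : A j i = -(2 * k))
    (hij' : A i j = -1) (u v : Fˣ) :
    Additive.ofMul (K2A.c F A j u v) =
      k • skew (fun u v => Additive.ofMul (K2A.c F A i u v)) u v := by
  have hc := K2A.isSteinbergCocycle_c (F := F) (A := A) i
  have h := hc.apply_zpow_two_mul_right u⁻¹ v (-k)
  rw [mul_neg, ← hji, K2A.c_zpow_right hij, hij', zpow_neg_one, inv_inv, ← zpow_neg_one,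
    skew_zpow_left hc.cocycle, smul_smul] at h
  rw [h]
  module

noncomputable def K2SL.quotSym (m : ℤ) (u v : Fˣ) : Additive (K2SL F ⧸ K2SL.sqSubgroup F m) :=
  Additive.ofMul (K2SL.sym F u v : K2SL F ⧸ K2SL.sqSubgroup F m)

theorem K2SL.isSteinbergCocycle_quotSym (m : ℤ) :
    IsSteinbergCocycle (K2SL.quotSym (F := F) m) :=
  K2SL.isSteinbergCocycle_sym.map (QuotientGroup.mk' (K2SL.sqSubgroup F m)).toAdditive

theorem K2SL.zsmul_skew_quotSym_eq_zero (m : ℤ) (u v : Fˣ) :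
    m • skew (K2SL.quotSym (F := F) m) u v = 0 := by
  have hmem : K2SL.sym F (u ^ 2) v ^ m ∈ K2SL.sqSubgroup F m :=
    Subgroup.subset_closure ⟨u, v, rfl⟩
  rw [(K2SL.isSteinbergCocycle_quotSym m).skew_eq_apply_mul_self_left, ← sq]
  exact congrArg Additive.ofMul ((QuotientGroup.eq_one_iff _).2 hmem)

end Presentations

def cartanMatrix₃ (a b c d : ℤ) : Matrix (Fin 3) (Fin 3) ℤ := !![2, -a, -b; -c, 2, -d; -1, -1, 2]

section Rank3

variable {F : Type} [Field F] (a c b' d' : ℤ)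

local notation "𝔸" => cartanMatrix₃ a (2 * b') c (2 * d')
local notation "Q" => K2SL F ⧸ K2SL.sqSubgroup F (a * d' - b' * c)

theorem K2A.zsmul_skew_c_two_eq_zero (u v : Fˣ) :
    (a * d' - b' * c) • skew (fun u v => Additive.ofMul (K2A.c F 𝔸 2 u v)) u v = 0 := by
  have hc := K2A.isSteinbergCocycle_c (F := F) (A := 𝔸) 2
  have h := congrArg Additive.ofMul
    (K2A.c_zpow_right (F := F) (A := 𝔸) (i := 0) (j := 1) (by decide) u v)
  rw [K2A.ofMul_c_eq_zsmul_skew (i := 2) (by decide) (k := b') rfl rfl,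
    K2A.ofMul_c_eq_zsmul_skew (i := 2) (by decide) (k := d') rfl rfl,
    skew_zpow_left hc.cocycle, skew_zpow_right hc.cocycle,
    show 𝔸 1 0 = -c from rfl, show 𝔸 0 1 = -a from rfl] at h
  linear_combination (norm := module) h

noncomputable def cartanQuotSym (i : Fin 3) (u v : Fˣ) : Additive Q :=
  K2SL.quotSym _ (u ^ ![2 * b', 2 * d', 1] i) v

theorem isSteinbergCocycle_cartanQuotSym (i : Fin 3) :
    IsSteinbergCocycle (cartanQuotSym (F := F) a c b' d' i) := by
  have hσ := K2SL.isSteinbergCocycle_quotSym (F := F) (a * d' - b' * c)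
  fin_cases i
  · exact hσ.comp_zpow_two_mul_left b'
  · exact hσ.comp_zpow_two_mul_left d'
  · convert hσ using 1
    funext u v
    simp [cartanQuotSym]

theorem cartanQuotSym_zpow_right {i j : Fin 3} (hij : i ≠ j) (u v : Fˣ) :
    cartanQuotSym (F := F) a c b' d' i u (v ^ 𝔸 j i) =
      cartanQuotSym a c b' d' j (u ^ 𝔸 i j) v := by
  have hσ := K2SL.isSteinbergCocycle_quotSym (F := F) (a * d' - b' * c)
  have hkill := K2SL.zsmul_skew_quotSym_eq_zero (F := F) (a * d' - b' * c) u v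
  fin_cases i <;> fin_cases j <;>
    simp [cartanQuotSym, cartanMatrix₃, ← mul_neg, hσ.apply_zpow_two_mul_left,
      hσ.apply_zpow_two_mul_right, skew_zpow_left hσ.cocycle, skew_zpow_right hσ.cocycle,
      smul_smul, -zpow_neg] at hij ⊢
  · linear_combination (norm := module) -hkill
  · linear_combination (norm := module) hkill

theorem cartanQuotSym_mul_left {i j : Fin 3} (hij : i ≠ j) (t u v : Fˣ) :
    cartanQuotSym (F := F) a c b' d' i (t * u) (v ^ 𝔸 j i) =
      cartanQuotSym a c b' d' i t (v ^ 𝔸 j i) + cartanQuotSym a c b' d' i u (v ^ 𝔸 j i) := by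
  have hσ := K2SL.isSteinbergCocycle_quotSym (F := F) (a * d' - b' * c)
  fin_cases i <;> fin_cases j <;>
    simp [cartanQuotSym, cartanMatrix₃, ← mul_neg, hσ.apply_zpow_two_mul_left,
      hσ.apply_zpow_two_mul_right, skew_mul_left hσ.cocycle, -zpow_neg] at hij ⊢

theorem cartanQuotSym_mul_right {i j : Fin 3} (hij : i ≠ j) (t u v : Fˣ) :
    cartanQuotSym (F := F) a c b' d' i (t ^ 𝔸 j i) (u * v) =
      cartanQuotSym a c b' d' i (t ^ 𝔸 j i) u + cartanQuotSym a c b' d' i (t ^ 𝔸 j i) v := by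
  have hσ := K2SL.isSteinbergCocycle_quotSym (F := F) (a * d' - b' * c)
  fin_cases i <;> fin_cases j <;>
    simp [cartanQuotSym, cartanMatrix₃, ← mul_neg, hσ.apply_zpow_two_mul_left,
      skew_mul_right hσ.cocycle, -zpow_neg] at hij ⊢

noncomputable def K2A.cartanToQuot : K2A F 𝔸 →* Q :=
  K2A.lift (cartanQuotSym a c b' d') (isSteinbergCocycle_cartanQuotSym a c b' d')
    (fun _ _ hij => cartanQuotSym_zpow_right a c b' d' hij)
    (fun _ _ hij => cartanQuotSym_mul_left a c b' d' hij)
    (fun _ _ hij => cartanQuotSym_mul_right a c b' d' hij)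

theorem K2A.cartanToQuot_c (i : Fin 3) (u v : Fˣ) :
    K2A.cartanToQuot a c b' d' (K2A.c F 𝔸 i u v) = K2SL.sym F (u ^ ![2 * b', 2 * d', 1] i) v :=
  K2A.lift_c _ _ _ _ _ i u v

noncomputable def K2SL.quotToCartan : Q →* K2A F 𝔸 :=
  QuotientGroup.lift _ (K2SL.lift (K2A.isSteinbergCocycle_c 2)) <| by
    have hc := K2A.isSteinbergCocycle_c (F := F) (A := 𝔸) 2
    rw [K2SL.sqSubgroup, Subgroup.closure_le]
    rintro _ ⟨u, v, rfl⟩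
    have h := K2A.zsmul_skew_c_two_eq_zero (F := F) a c b' d' u v
    rw [hc.skew_eq_apply_mul_self_left, ← sq] at h
    rw [SetLike.mem_coe, MonoidHom.mem_ker, map_zpow, K2SL.lift_sym]
    exact congrArg Additive.toMul h

theorem K2SL.quotToCartan_mk_sym (u v : Fˣ) :
    K2SL.quotToCartan (F := F) a c b' d' (K2SL.sym F u v) = K2A.c F 𝔸 2 u v :=
  (QuotientGroup.lift_mk _ _ _).trans (K2SL.lift_sym _ u v)

noncomputable def K2A.cartanMulEquiv : K2A F 𝔸 ≃* Q :=
  MonoidHom.toMulEquiv (K2A.cartanToQuot a c b' d') (K2SL.quotToCartan a c b' d')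
    (K2A.hom_ext fun i u v => by
      rw [MonoidHom.comp_apply, K2A.cartanToQuot_c, K2SL.quotToCartan_mk_sym, MonoidHom.id_apply]
      have hc := K2A.isSteinbergCocycle_c (F := F) (A := 𝔸) 2
      fin_cases i
      · exact Additive.ofMul.injective <| (hc.apply_zpow_two_mul_left u v b').trans
          (K2A.ofMul_c_eq_zsmul_skew (by decide) rfl rfl u v).symm
      · exact Additive.ofMul.injective <| (hc.apply_zpow_two_mul_left u v d').trans
          (K2A.ofMul_c_eq_zsmul_skew (by decide) rfl rfl u v).symm
      · simp)
    (QuotientGroup.monoidHom_ext _ <| K2SL.hom_ext fun u v => by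
      simp [K2SL.quotToCartan_mk_sym, K2A.cartanToQuot_c])

end Rank3

theorem K2A_rank3_class1_general (a b c d : ℤ) (hbe : Even b) (hde : Even d) (F : Type) [Field F] :
    Nonempty (K2A F !![2, -a, -b; -c, 2, -d; -1, -1, 2] ≃*
      (K2SL F ⧸ K2SL.sqSubgroup F ((a * d - b * c) / 2))) := by
  obtain ⟨b', rfl⟩ := hbe
  obtain ⟨d', rfl⟩ := hde
  have hm : (a * (d' + d') - (b' + b') * c) / 2 = a * d' - b' * c := by
    rw [show a * (d' + d') - (b' + b') * c = 2 * (a * d' - b' * c) by ring]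
    exact Int.mul_ediv_cancel_left _ two_ne_zero
  rw [hm, ← two_mul, ← two_mul]
  exact ⟨K2A.cartanMulEquiv a c b' d'⟩

/-- For positive integers `a,b,c,d` with `b,d` even and the GCM with rows
`(2,-a,-b)`, `(-c,2,-d)`, `(-1,-1,2)`,
`K₂(A,F) ≅ K₂(2,F) / ((ad-bc)/2)⟨{u²,v}⟩`. -/
theorem K2A_rank3_class1 (a b c d : ℤ) (ha : 0 < a) (hb : 0 < b) (hc : 0 < c) (hd : 0 < d)
    (hbe : Even b) (hde : Even d) (F : Type) [Field F] :
    Nonempty (K2A F !![2, -a, -b; -c, 2, -d; -1, -1, 2] ≃*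
      (K2SL F ⧸ K2SL.sqSubgroup F ((a * d - b * c) / 2))) :=
  K2A_rank3_class1_general a b c d hbe hde F
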